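/- Weak Cut: if L_α = L_β, σ * α ⊢_k β and σ ⊢_k α, then σ ⊢_k β. -/

import Mathlib

/-!
Since `L_α = L_β`, the queries `α` and `β` induce the same relevance degrees, so
`Γ_{σ,k,α} = Γ_{σ,k,β}`, and appending `α` to `σ` changes no relevance degree with respect to `β`:
a chain through `α` can restart at `β`. In `σ * α` the new entry `α` is maximally relevant to `β`
and the most recent one, hence it is considered first. As `Γ_{σ,k,β}` is consistent and already
entails `α`, having `α` in the set from the start changes none of the later decisions, so
`Γ_{σ*α,k,β} ⊆ {α} ∪ Γ_{σ,k,β}`, and `σ ⊢_k β` follows by cut.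
-/

namespace BeliefSeq

/-- Propositional formulas over a type `ν` of propositional variables,
with connectives ¬, ∧, ∨, →, ↔ and constants true, false. -/
inductive PropForm (ν : Type) : Type where
  | var : ν → PropForm ν
  | tru : PropForm ν
  | fls : PropForm ν
  | neg : PropForm ν → PropForm ν
  | conj : PropForm ν → PropForm ν → PropForm ν
  | disj : PropForm ν → PropForm ν → PropForm ν
  | impl : PropForm ν → PropForm ν → PropForm ν
  | biim : PropForm ν → PropForm ν → PropForm ν

namespace PropForm

variable {ν : Type}

/-- Classical (two-valued) evaluation of a formula under a valuation. -/
def eval (v : ν → Bool) : PropForm ν → Bool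
  | var x => v x
  | tru => true
  | fls => false
  | neg φ => !(φ.eval v)
  | conj φ ψ => φ.eval v && ψ.eval v
  | disj φ ψ => φ.eval v || ψ.eval v
  | impl φ ψ => !(φ.eval v) || ψ.eval v
  | biim φ ψ => φ.eval v == ψ.eval v

/-- The set `L(α)` of variables occurring syntactically in a formula. -/
def vars : PropForm ν → Set ν
  | var x => {x}
  | tru => ∅
  | fls => ∅
  | neg φ => φ.vars
  | conj φ ψ => φ.vars ∪ ψ.vars
  | disj φ ψ => φ.vars ∪ ψ.vars
  | impl φ ψ => φ.vars ∪ ψ.vars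
  | biim φ ψ => φ.vars ∪ ψ.vars

end PropForm

variable {ν : Type}

/-- `α ⇔ β` : logical equivalence (α ↔ β is a tautology). -/
def Equiv (α β : PropForm ν) : Prop := ∀ v, α.eval v = β.eval v

def Tautology (α : PropForm ν) : Prop := ∀ v, α.eval v = true

def Contradiction (α : PropForm ν) : Prop := ∀ v, α.eval v = false

/-- Classical consequence `Γ ⊢ γ`. -/
def Entails (Γ : Set (PropForm ν)) (γ : PropForm ν) : Prop :=
  ∀ v, (∀ φ ∈ Γ, φ.eval v = true) → γ.eval v = true

/-- Consistency (satisfiability) of a set of formulas. -/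
def Satisfiable (Γ : Set (PropForm ν)) : Prop :=
  ∃ v, ∀ φ ∈ Γ, φ.eval v = true

/-- `V` expresses `α`: α is logically equivalent to some formula
all of whose variables lie in `V`. -/
def Expresses (V : Set ν) (α : PropForm ν) : Prop :=
  ∃ β : PropForm ν, Equiv α β ∧ β.vars ⊆ V

/-- `L_α` : the smallest language of `α` (intersection of all sets of
variables expressing `α`). -/
def Lang (α : PropForm ν) : Set ν := ⋂₀ {V : Set ν | Expresses V α}

/-- Direct relevance (`0`-relevance): logical language overlap `L_α ∩ L_β ≠ ∅`. -/
def DirectRel (α β : PropForm ν) : Prop := (Lang α ∩ Lang β).Nonempty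

/-- `k`-relevance of `α`, `β` w.r.t. the belief sequence `σ`:
there is a chain `χ_1, …, χ_k` of formulas of `σ` with
`α, χ₁` directly relevant, each `χ_i, χ_{i+1}` directly relevant,
and `χ_k, β` directly relevant (for `k = 0` this is direct relevance). -/
def KRel (k : ℕ) (α β : PropForm ν) (σ : List (PropForm ν)) : Prop :=
  ∃ l : List (PropForm ν), l.length = k ∧ (∀ χ ∈ l, χ ∈ σ) ∧
    List.Chain' DirectRel (α :: (l ++ [β]))

/-- `rel(α,β,σ)` : the least `k` such that `α, β` are `k`-relevant w.r.t. `σ`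
(`∞ = ⊤` if they are irrelevant). -/
noncomputable def relDeg (α β : PropForm ν) (σ : List (PropForm ν)) : ℕ∞ :=
  sInf {n : ℕ∞ | ∃ k : ℕ, n = (k : ℕ∞) ∧ KRel k α β σ}

open Classical in
/-- The priority ordering imposed by the query `γ` on the (indexed) entries of `σ`:
more relevant first; among equally relevant entries, more recent
(larger index) first. -/
noncomputable def priority (γ : PropForm ν) (σ : List (PropForm ν)) :
    (ℕ × PropForm ν) → (ℕ × PropForm ν) → Bool :=
  fun a b =>
    decide (relDeg γ a.2 σ < relDeg γ b.2 σ ∨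
      (relDeg γ a.2 σ = relDeg γ b.2 σ ∧ b.1 ≤ a.1))

/-- The entries `δ_1, …, δ_n` of `σ` reordered by the priority above. -/
noncomputable def prioritized (γ : PropForm ν) (σ : List (PropForm ν)) :
    List (PropForm ν) :=
  ((σ.zipIdx.map Prod.swap).mergeSort (priority γ σ)).map Prod.snd

open Classical in
/-- The prioritized maxiconsistent set `Γ_{⟨σ,k,γ⟩}` : go through `δ_1, …, δ_n`
in priority order, skipping `δ_{i+1}` if `Γ^i ⊢ ¬δ_{i+1}` or `δ_{i+1}` is not
`k`-relevant to `γ` w.r.t. `σ`, and adding it otherwise. -/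
noncomputable def Gamma (σ : List (PropForm ν)) (k : ℕ) (γ : PropForm ν) :
    Set (PropForm ν) :=
  (prioritized γ σ).foldl
    (fun Γ δ =>
      if Entails Γ (PropForm.neg δ) ∨ (k : ℕ∞) < relDeg γ δ σ then Γ
      else insert δ Γ) ∅

/-- `σ ⊢_k γ` iff `Γ_{⟨σ,k,γ⟩} ⊢ γ`. -/
def InferK (σ : List (PropForm ν)) (k : ℕ) (γ : PropForm ν) : Prop :=
  Entails (Gamma σ k γ) γ

/-- `C_k(σ) = {γ | σ ⊢_k γ}`. -/
def Ck (σ : List (PropForm ν)) (k : ℕ) : Set (PropForm ν) :=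
  {γ | InferK σ k γ}

/-- Revision `σ * γ` : concatenation of `γ` at the (most recent) end of `σ`. -/
def revise (σ : List (PropForm ν)) (γ : PropForm ν) : List (PropForm ν) :=
  σ ++ [γ]

theorem Entails.mono {Γ Δ : Set (PropForm ν)} {φ : PropForm ν} (h : Γ ⊆ Δ)
    (hΓ : Entails Γ φ) : Entails Δ φ :=
  fun v hv => hΓ v fun ψ hψ => hv ψ (h hψ)

theorem Entails.cut {Γ : Set (PropForm ν)} {α γ : PropForm ν} (hα : Entails Γ α)
    (h : Entails (insert α Γ) γ) : Entails Γ γ :=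
  fun v hv => h v (Set.forall_mem_insert.2 ⟨hα v hv, hv⟩)

theorem satisfiable_insert_of_not_entails_neg {Γ : Set (PropForm ν)} {δ : PropForm ν}
    (h : ¬ Entails Γ (PropForm.neg δ)) : Satisfiable (insert δ Γ) := by
  simp only [Entails, not_forall] at h
  obtain ⟨v, hv, hδ⟩ := h
  refine ⟨v, Set.forall_mem_insert.2 ⟨?_, hv⟩⟩
  simpa [PropForm.eval] using hδ

section Relevance

variable {α β δ : PropForm ν} {σ : List (PropForm ν)} {k : ℕ}

theorem kRel_iff : KRel k α β σ ↔ ∃ l : List (PropForm ν), l.length = k ∧ (∀ χ ∈ l, χ ∈ σ) ∧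
    (α :: (l ++ [β])).IsChain DirectRel :=
  Iff.rfl

theorem DirectRel.mono_left {χ : PropForm ν} (h : Lang α ⊆ Lang β) (hα : DirectRel α χ) :
    DirectRel β χ :=
  hα.mono (Set.inter_subset_inter_left _ h)

theorem KRel.mono_left (h : Lang α ⊆ Lang β) (hα : KRel k α δ σ) : KRel k β δ σ := by
  obtain ⟨l, hl, hσ, hchain⟩ := kRel_iff.1 hα
  exact kRel_iff.2 ⟨l, hl, hσ, hchain.imp_head (DirectRel.mono_left h)⟩

theorem KRel.mono_right {τ : List (PropForm ν)} (h : ∀ χ ∈ σ, χ ∈ τ) (hσ : KRel k α δ σ) :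
    KRel k α δ τ := by
  obtain ⟨l, hl, hlσ, hchain⟩ := kRel_iff.1 hσ
  exact kRel_iff.2 ⟨l, hl, fun χ hχ => h χ (hlσ χ hχ), hchain⟩

theorem KRel.lang_nonempty (h : KRel k α δ σ) : (Lang α).Nonempty := by
  obtain ⟨l, -, -, hchain⟩ := kRel_iff.1 h
  obtain ⟨χ, t, ht⟩ := List.exists_cons_of_ne_nil (List.concat_ne_nil δ l)
  rw [ht, List.isChain_cons_cons] at hchain
  exact hchain.1.left

theorem KRel.exists_le_of_append_singleton (h : Lang α ⊆ Lang β) :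
    KRel k β δ (σ ++ [α]) → ∃ j ≤ k, KRel j β δ σ := by
  induction k using Nat.strong_induction_on with
  | _ k ih =>
  intro hk
  obtain ⟨l, rfl, hlσ, hchain⟩ := kRel_iff.1 hk
  by_cases hα : α ∈ l
  · obtain ⟨s, t, rfl⟩ := List.append_of_mem hα
    have htail : (α :: (t ++ [δ])).IsChain DirectRel :=
      (List.isChain_cons_split.1 (by simpa using hchain)).2
    obtain ⟨j, hj, hjσ⟩ := ih t.length (by simp; omega) <| kRel_iff.2
      ⟨t, rfl, fun χ hχ => hlσ χ (by simp [hχ]), htail.imp_head (DirectRel.mono_left h)⟩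
    exact ⟨j, hj.trans (by simp; omega), hjσ⟩
  · refine ⟨l.length, le_rfl, l, rfl, fun χ hχ => ?_, hchain⟩
    exact (List.mem_append.1 (hlσ χ hχ)).resolve_right fun hχα =>
      hα (List.mem_singleton.1 hχα ▸ hχ)

theorem relDeg_le_of_kRel (h : KRel k α β σ) : relDeg α β σ ≤ k :=
  sInf_le ⟨k, rfl, h⟩

theorem le_relDeg {n : ℕ∞} (h : ∀ k, KRel k α β σ → n ≤ k) : n ≤ relDeg α β σ :=
  le_sInf fun _ ⟨k, hn, hk⟩ => hn ▸ h k hk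

theorem relDeg_anti_left (h : Lang α ⊆ Lang β) : relDeg β δ σ ≤ relDeg α δ σ :=
  le_relDeg fun _ hk => relDeg_le_of_kRel (hk.mono_left h)

theorem relDeg_congr_left (h : Lang α = Lang β) : relDeg α δ σ = relDeg β δ σ :=
  (relDeg_anti_left h.ge).antisymm (relDeg_anti_left h.le)

theorem relDeg_le_relDeg_of_lang_subset (h : Lang β ⊆ Lang α) :
    relDeg β α σ ≤ relDeg β δ σ :=
  le_relDeg fun k hk => by
    obtain ⟨x, hx⟩ := hk.lang_nonempty
    calc relDeg β α σ ≤ (0 : ℕ) :=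
          relDeg_le_of_kRel ⟨[], rfl, by simp, List.isChain_pair.2 ⟨x, hx, h hx⟩⟩
      _ ≤ k := by simp

theorem relDeg_append_singleton (h : Lang α ⊆ Lang β) :
    relDeg β δ (σ ++ [α]) = relDeg β δ σ :=
  le_antisymm
    (le_relDeg fun _ hk => relDeg_le_of_kRel (hk.mono_right fun _ hχ => List.mem_append_left _ hχ))
    (le_relDeg fun _ hk => by
      obtain ⟨j, hj, hjσ⟩ := hk.exists_le_of_append_singleton h
      exact (relDeg_le_of_kRel hjσ).trans (by exact_mod_cast hj))

end Relevance

section Priority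

variable {γ : PropForm ν} {σ : List (PropForm ν)}

/-- `priority` is the preorder induced by this key into a lexicographic product: relevance
degree first, then the index, reversed so that more recent entries come first. -/
noncomputable def priorityKey (γ : PropForm ν) (σ : List (PropForm ν)) (a : ℕ × PropForm ν) :
    ℕ∞ ×ₗ ℕᵒᵈ :=
  toLex (relDeg γ a.2 σ, OrderDual.toDual a.1)

theorem priority_iff {a b : ℕ × PropForm ν} :
    priority γ σ a b = true ↔ priorityKey γ σ a ≤ priorityKey γ σ b := by
  simp [priority, priorityKey, Prod.Lex.toLex_le_toLex]

theorem priority_congr {γ' : PropForm ν} {σ' : List (PropForm ν)}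
    (h : ∀ δ, relDeg γ δ σ = relDeg γ' δ σ') : priority γ σ = priority γ' σ' := by
  funext a b
  simp only [priority, h]

theorem mergeSort_priority_append_singleton {E : List (ℕ × PropForm ν)} {a : ℕ × PropForm ν}
    (hidx : ((E ++ [a]).map Prod.fst).Nodup) (ha : ∀ x ∈ E, priority γ σ a x) :
    (E ++ [a]).mergeSort (priority γ σ) = a :: E.mergeSort (priority γ σ) := by
  have trans : ∀ x y z, priority γ σ x y → priority γ σ y z → priority γ σ x z := by
    simp only [priority_iff]; exact fun _ _ _ => le_trans
  have total : ∀ x y, (priority γ σ x y || priority γ σ y x) = true := by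
    intro x y; simpa only [Bool.or_eq_true, priority_iff] using le_total _ _
  have hperm : ((E ++ [a]).mergeSort (priority γ σ)).Perm (a :: E.mergeSort (priority γ σ)) :=
    (List.mergeSort_perm _ _).trans <|
      (List.perm_append_singleton _ _).trans ((List.mergeSort_perm _ _).symm.cons a)
  refine hperm.eq_of_pairwise (le := fun x y => priority γ σ x y = true) ?_
    (List.pairwise_mergeSort trans total _)
    (List.pairwise_cons.2 ⟨fun x hx => ha x (List.mem_mergeSort.1 hx),
      List.pairwise_mergeSort trans total _⟩)
  intro x y hx hy hxy hyx
  have hidx_eq := congrArg (fun p => OrderDual.ofDual (ofLex p).2)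
    (le_antisymm (priority_iff.1 hxy) (priority_iff.1 hyx))
  exact List.inj_on_of_nodup_map hidx (List.mem_mergeSort.1 hx)
    (List.mem_mergeSort.1 (hperm.symm.subset hy)) hidx_eq

theorem prioritized_append_singleton {α : PropForm ν}
    (hdeg : ∀ δ, relDeg γ δ (σ ++ [α]) = relDeg γ δ σ) (hmin : ∀ δ, relDeg γ α σ ≤ relDeg γ δ σ) :
    prioritized γ (σ ++ [α]) = α :: prioritized γ σ := by
  have hentries : (σ ++ [α]).zipIdx.map Prod.swap = σ.zipIdx.map Prod.swap ++ [(σ.length, α)] := by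
    simp [List.zipIdx_append]
  have hidx : (((σ ++ [α]).zipIdx.map Prod.swap).map Prod.fst).Nodup := by
    rw [List.map_map, show Prod.fst ∘ Prod.swap = Prod.snd from rfl, List.zipIdx_map_snd]
    exact List.nodup_range' 1
  unfold prioritized
  rw [priority_congr hdeg, hentries, mergeSort_priority_append_singleton (hentries ▸ hidx)]
  · rfl
  rintro ⟨i, χ⟩ hχ
  simp only [List.mem_map, Prod.exists, Prod.swap_prod_mk, Prod.mk.injEq] at hχ
  obtain ⟨χ, i, hmem, rfl, rfl⟩ := hχ
  simp only [priority, decide_eq_true_eq]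
  exact (hmin _).lt_or_eq.imp_right fun h => ⟨h, (List.mem_zipIdx' hmem).1.le⟩

end Priority

open Classical in
/-- The step `Γ^i ↦ Γ^{i+1}` of `Gamma`, with `d δ` standing for `rel(γ, δ, σ)`. -/
def gammaStep (k : ℕ) (d : PropForm ν → ℕ∞) (Γ : Set (PropForm ν)) (δ : PropForm ν) :
    Set (PropForm ν) :=
  if Entails Γ (PropForm.neg δ) ∨ (k : ℕ∞) < d δ then Γ else insert δ Γ

theorem Gamma_eq_foldl (σ : List (PropForm ν)) (k : ℕ) (γ : PropForm ν) :
    Gamma σ k γ = (prioritized γ σ).foldl (gammaStep k (relDeg γ · σ)) ∅ :=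
  rfl

section GammaStep

variable {k : ℕ} {d : PropForm ν → ℕ∞}

theorem gammaStep_eq_or (Γ : Set (PropForm ν)) (δ : PropForm ν) :
    gammaStep k d Γ δ = Γ ∨ gammaStep k d Γ δ = insert δ Γ := by
  unfold gammaStep; split_ifs <;> simp

theorem subset_foldl_gammaStep :
    ∀ (L : List (PropForm ν)) (Γ : Set (PropForm ν)), Γ ⊆ L.foldl (gammaStep k d) Γ
  | [], _ => subset_rfl
  | δ :: L, Γ => by
    refine subset_trans ?_ (subset_foldl_gammaStep L _)
    rcases gammaStep_eq_or (k := k) (d := d) Γ δ with h | h <;> rw [h]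
    exact Set.subset_insert δ Γ

theorem Satisfiable.foldl_gammaStep :
    ∀ {L : List (PropForm ν)} {Γ : Set (PropForm ν)}, Satisfiable Γ →
      Satisfiable (L.foldl (gammaStep k d) Γ)
  | [], _, hΓ => hΓ
  | δ :: L, Γ, hΓ => by
    refine Satisfiable.foldl_gammaStep (L := L) ?_
    unfold gammaStep
    split_ifs with h
    · exact hΓ
    · exact satisfiable_insert_of_not_entails_neg fun h' => h (Or.inl h')

theorem gammaStep_insert {Γ F : Set (PropForm ν)} {α δ : PropForm ν}
    (hF : gammaStep k d Γ δ ⊆ F) (hsat : Satisfiable F) (hα : Entails F α) :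
    gammaStep k d (insert α Γ) δ = insert α (gammaStep k d Γ δ) := by
  by_cases hskip : Entails Γ (PropForm.neg δ) ∨ (k : ℕ∞) < d δ
  · have hskip' : Entails (insert α Γ) (PropForm.neg δ) ∨ (k : ℕ∞) < d δ :=
      hskip.imp_left (Entails.mono (Set.subset_insert α Γ))
    simp only [gammaStep, if_pos hskip, if_pos hskip']
  · have hadd : gammaStep k d Γ δ = insert δ Γ := by simp only [gammaStep, if_neg hskip]
    have hadd' : ¬ (Entails (insert α Γ) (PropForm.neg δ) ∨ (k : ℕ∞) < d δ) := by
      refine not_or.2 ⟨fun hneg => ?_, (not_or.1 hskip).2⟩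
      -- a model of `F` satisfies `α`, `Γ` and `δ` at once
      obtain ⟨v, hv⟩ := hsat
      rw [hadd] at hF
      have hδ : δ.eval v = true := hv δ (hF (Set.mem_insert δ Γ))
      have := hneg v (Set.forall_mem_insert.2 ⟨hα v hv, fun φ hφ => hv φ (hF (Or.inr hφ))⟩)
      simp [PropForm.eval, hδ] at this
    simp only [gammaStep, if_neg hadd', if_neg hskip, Set.insert_comm]

theorem foldl_gammaStep_insert {α : PropForm ν} :
    ∀ {L : List (PropForm ν)} {Γ : Set (PropForm ν)},
      Satisfiable (L.foldl (gammaStep k d) Γ) → Entails (L.foldl (gammaStep k d) Γ) α →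
      L.foldl (gammaStep k d) (insert α Γ) = insert α (L.foldl (gammaStep k d) Γ)
  | [], _, _, _ => rfl
  | δ :: L, Γ, hsat, hα => by
    simp only [List.foldl_cons] at hsat hα ⊢
    rw [gammaStep_insert (subset_foldl_gammaStep L _) hsat hα, foldl_gammaStep_insert hsat hα]

theorem foldl_gammaStep_subset_insert {L : List (PropForm ν)} {Γ : Set (PropForm ν)}
    {α : PropForm ν} (hsat : Satisfiable (L.foldl (gammaStep k d) Γ))
    (hα : Entails (L.foldl (gammaStep k d) Γ) α) :
    L.foldl (gammaStep k d) (gammaStep k d Γ α) ⊆ insert α (L.foldl (gammaStep k d) Γ) := by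
  rcases gammaStep_eq_or (k := k) (d := d) Γ α with h | h <;> rw [h]
  · exact Set.subset_insert α _
  · rw [foldl_gammaStep_insert hsat hα]

end GammaStep

theorem satisfiable_Gamma (σ : List (PropForm ν)) (k : ℕ) (γ : PropForm ν) :
    Satisfiable (Gamma σ k γ) :=
  Satisfiable.foldl_gammaStep ⟨fun _ => true, fun _ h => h.elim⟩

theorem Gamma_congr_left {α β : PropForm ν} (hL : Lang α = Lang β) (σ : List (PropForm ν))
    (k : ℕ) : Gamma σ k α = Gamma σ k β := by
  rw [Gamma_eq_foldl, Gamma_eq_foldl, prioritized, prioritized,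
    priority_congr fun _ => relDeg_congr_left hL]
  simp only [relDeg_congr_left hL]

theorem Gamma_revise_subset {α β : PropForm ν} (hL : Lang α = Lang β) {σ : List (PropForm ν)}
    {k : ℕ} (hα : Entails (Gamma σ k β) α) :
    Gamma (revise σ α) k β ⊆ insert α (Gamma σ k β) := by
  have hdeg : ∀ δ, relDeg β δ (σ ++ [α]) = relDeg β δ σ := fun _ => relDeg_append_singleton hL.le
  have hfirst : prioritized β (σ ++ [α]) = α :: prioritized β σ :=
    prioritized_append_singleton hdeg fun _ => relDeg_le_relDeg_of_lang_subset hL.ge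
  rw [Gamma_eq_foldl] at hα ⊢
  rw [revise, hfirst, List.foldl_cons, Gamma_eq_foldl]
  simp only [hdeg]
  exact foldl_gammaStep_subset_insert (satisfiable_Gamma σ k β) hα

/-- Weak Cut: if `L_α = L_β`, `σ * α ⊢_k β` and `σ ⊢_k α`,
then `σ ⊢_k β`. -/
theorem weak_cut {ν : Type} (α β : PropForm ν)
    (hL : Lang α = Lang β) (σ : List (PropForm ν)) (k : ℕ)
    (hrev : InferK (revise σ α) k β) (hα : InferK σ k α) :
    InferK σ k β := by
  have hαβ : Entails (Gamma σ k β) α := Gamma_congr_left hL σ k ▸ hα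
  exact hαβ.cut (hrev.mono (Gamma_revise_subset hL hαβ))

end BeliefSeq
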